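/- Let M ⊂ ℝⁿ be a compact convex set of width w and let x₁,...,x_k ∈ M with k < n. Then there exists a plank P of width at least w/2 whose bounding hyperplanes intersect M and whose open interior contains none of the points xᵢ. -/

import Mathlib

open scoped RealInnerProductSpace

variable {n : ℕ}

/-- The width of `C` in the direction of the unit vector `u`. -/
noncomputable def dirWidth (C : Set (EuclideanSpace ℝ (Fin n)))
    (u : EuclideanSpace ℝ (Fin n)) : ℝ :=
  sSup ((fun x => ⟪u, x⟫) '' C) - sInf ((fun x => ⟪u, x⟫) '' C)

/-- The width of a set `C ⊂ ℝⁿ`. -/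
noncomputable def setWidth (C : Set (EuclideanSpace ℝ (Fin n))) : ℝ :=
  sInf (dirWidth C '' {u | ‖u‖ = 1})

/-!
The `k` points together with any point `p₀ ∈ M` are `k + 1 ≤ n` points, so they lie on a
common hyperplane `⟪u, ·⟫ = c`. This hyperplane meets `M` at `p₀` and cuts the supporting slab
of `M` in direction `u`, whose width is at least `w`, into two planks; the wider one has
width at least `w / 2`, and no `xᵢ` lies in its interior.
-/

theorem exists_norm_eq_one_forall_inner_eq_zero {E : Type*} [NormedAddCommGroup E]
    [InnerProductSpace ℝ E] [FiniteDimensional ℝ E] {ι : Type*} [Fintype ι]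
    (hι : Fintype.card ι < Module.finrank ℝ E) (v : ι → E) :
    ∃ u : E, ‖u‖ = 1 ∧ ∀ i, ⟪u, v i⟫ = 0 := by
  set V := Submodule.span ℝ (Set.range v)
  have hV : V ≠ ⊤ := by
    rintro hV
    have : Module.finrank ℝ V ≤ Fintype.card ι := finrank_range_le_card v
    rw [hV, finrank_top] at this
    omega
  obtain ⟨u, huV, hu0⟩ :=
    Submodule.exists_mem_ne_zero_of_ne_bot (mt Submodule.orthogonal_eq_bot_iff.mp hV)
  refine ⟨(‖u‖⁻¹ : ℝ) • u, norm_smul_inv_norm hu0, fun i => ?_⟩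
  rw [real_inner_smul_left, real_inner_comm,
    Submodule.inner_right_of_mem_orthogonal (Submodule.subset_span (Set.mem_range_self i)) huV,
    mul_zero]

theorem exists_norm_eq_one_forall_inner_eq {E : Type*} [NormedAddCommGroup E]
    [InnerProductSpace ℝ E] [FiniteDimensional ℝ E] {ι : Type*} [Fintype ι]
    (hι : Fintype.card ι < Module.finrank ℝ E) (x : ι → E) (p₀ : E) :
    ∃ u : E, ‖u‖ = 1 ∧ ∀ i, ⟪u, x i⟫ = ⟪u, p₀⟫ := by
  obtain ⟨u, hu, hux⟩ := exists_norm_eq_one_forall_inner_eq_zero hι (fun i => x i - p₀)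
  exact ⟨u, hu, fun i => sub_eq_zero.mp (by simpa only [inner_sub_right] using hux i)⟩

section Width

variable {C : Set (EuclideanSpace ℝ (Fin n))}

theorem IsCompact.image_inner (hC : IsCompact C) (u : EuclideanSpace ℝ (Fin n)) :
    IsCompact ((fun x => ⟪u, x⟫) '' C) :=
  hC.image (continuous_const.inner continuous_id)

theorem dirWidth_nonneg (hC : IsCompact C) (hne : C.Nonempty) (u : EuclideanSpace ℝ (Fin n)) :
    0 ≤ dirWidth C u :=
  sub_nonneg.mpr <| csInf_le_csSup (hne.image _) (hC.image_inner u).bddBelow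
    (hC.image_inner u).bddAbove

theorem setWidth_le_dirWidth (hC : IsCompact C) (hne : C.Nonempty)
    {u : EuclideanSpace ℝ (Fin n)} (hu : ‖u‖ = 1) : setWidth C ≤ dirWidth C u :=
  csInf_le ⟨0, by rintro _ ⟨v, -, rfl⟩; exact dirWidth_nonneg hC hne v⟩ ⟨u, hu, rfl⟩

end Width

theorem stmt8_general {k : ℕ} (hk : k < n)
    (M : Set (EuclideanSpace ℝ (Fin n))) (hMc : IsCompact M)
    (hMne : M.Nonempty)
    (x : Fin k → EuclideanSpace ℝ (Fin n))
    (w : ℝ) (hw : w = setWidth M) :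
    ∃ (u : EuclideanSpace ℝ (Fin n)) (a b : ℝ), ‖u‖ = 1 ∧ a ≤ b ∧
      w / 2 ≤ b - a ∧
      (∃ p ∈ M, ⟪u, p⟫ = a) ∧ (∃ p ∈ M, ⟪u, p⟫ = b) ∧
      ∀ i : Fin k, ¬ (a < ⟪u, x i⟫ ∧ ⟪u, x i⟫ < b) := by
  obtain ⟨p₀, hp₀⟩ := hMne
  obtain ⟨u, hu, hux⟩ := exists_norm_eq_one_forall_inner_eq
    (by simpa [finrank_euclideanSpace_fin] using hk) x p₀
  set S := (fun x => ⟪u, x⟫) '' M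
  have hS : IsCompact S := hMc.image_inner u
  obtain ⟨p, hp, hpa⟩ : sInf S ∈ S := hS.sInf_mem ⟨_, p₀, hp₀, rfl⟩
  obtain ⟨q, hq, hqb⟩ : sSup S ∈ S := hS.sSup_mem ⟨_, p₀, hp₀, rfl⟩
  have hac : sInf S ≤ ⟪u, p₀⟫ := csInf_le hS.bddBelow ⟨p₀, hp₀, rfl⟩
  have hcb : ⟪u, p₀⟫ ≤ sSup S := le_csSup hS.bddAbove ⟨p₀, hp₀, rfl⟩
  have hwS : w ≤ sSup S - sInf S := hw ▸ setWidth_le_dirWidth hMc ⟨p₀, hp₀⟩ hu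
  rcases le_total (sSup S - ⟪u, p₀⟫) (⟪u, p₀⟫ - sInf S) with hlow | hhigh
  · refine ⟨u, sInf S, ⟪u, p₀⟫, hu, hac, by linarith, ⟨p, hp, hpa⟩, ⟨p₀, hp₀, rfl⟩, ?_⟩
    exact fun i hi => hi.2.ne (hux i)
  · refine ⟨u, ⟪u, p₀⟫, sSup S, hu, hcb, by linarith, ⟨p₀, hp₀, rfl⟩, ⟨q, hq, hqb⟩, ?_⟩
    exact fun i hi => hi.1.ne' (hux i)

theorem stmt8 {k : ℕ} (hn : 1 ≤ n) (hk : k < n)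
    (M : Set (EuclideanSpace ℝ (Fin n))) (hMc : IsCompact M) (hMconv : Convex ℝ M)
    (hMne : M.Nonempty)
    (x : Fin k → EuclideanSpace ℝ (Fin n)) (hx : ∀ i, x i ∈ M)
    (w : ℝ) (hw : w = setWidth M) :
    ∃ (u : EuclideanSpace ℝ (Fin n)) (a b : ℝ), ‖u‖ = 1 ∧ a ≤ b ∧
      w / 2 ≤ b - a ∧
      (∃ p ∈ M, ⟪u, p⟫ = a) ∧ (∃ p ∈ M, ⟪u, p⟫ = b) ∧
      ∀ i : Fin k, ¬ (a < ⟪u, x i⟫ ∧ ⟪u, x i⟫ < b) :=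
  stmt8_general hk M hMc hMne x w hw
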